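/- arXiv:1301.4438 — 8 statements merged into one kernel-verified Lean document; each statement's English description precedes it below -/
import Mathlib

section
/- Suppose an m×n matrix A over a field factors as A = L̄ · R · Ū where L̄ is an invertible lower triangular m×m matrix, Ū is an invertible upper triangular n×n matrix, and R is any m×n matrix. Then for all k ≤ m and t ≤ n, the rank of the leading k×t submatrix of A equals the rank of the leading k×t submatrix of R. -/
open Matrix

lemma sum_castLE_aux {M : Type*} [AddCommMonoid M] {m k : ℕ} (hk : k ≤ m) (c : Fin m → M)
    (h0 : ∀ l : Fin m, k ≤ (l : ℕ) → c l = 0) :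
    ∑ l : Fin m, c l = ∑ l : Fin k, c (Fin.castLE hk l) := by
  classical
  have h1 : ∑ l : Fin k, c (Fin.castLE hk l) = ∑ l ∈ Finset.univ.map (Fin.castLEEmb hk), c l := by
    rw [Finset.sum_map]; rfl
  rw [h1]
  refine (Finset.sum_subset (Finset.subset_univ _) ?_).symm
  intro x _ hx
  apply h0
  by_contra h
  push_neg at h
  exact hx (Finset.mem_map.mpr ⟨⟨x, h⟩, Finset.mem_univ _, rfl⟩)

theorem rank_leading_submatrix_of_LRU (F : Type*) [Field F] {m n : ℕ}
    (A R : Matrix (Fin m) (Fin n) F)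
    (L : Matrix (Fin m) (Fin m) F) (U : Matrix (Fin n) (Fin n) F)
    (hLtri : ∀ i j : Fin m, i < j → L i j = 0) (hL : IsUnit L)
    (hUtri : ∀ i j : Fin n, j < i → U i j = 0) (hU : IsUnit U)
    (hA : A = L * R * U) :
    ∀ (k t : ℕ) (hk : k ≤ m) (ht : t ≤ n),
      (A.submatrix (Fin.castLE hk) (Fin.castLE ht)).rank =
      (R.submatrix (Fin.castLE hk) (Fin.castLE ht)).rank := by
  intro k t hk ht
  subst hA
  -- diagonal entries of L and U are nonzero
  have hLdet : L.det = ∏ i, L i i :=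
    Matrix.det_of_lowerTriangular L (fun i j hij => hLtri i j hij)
  have hUdet : U.det = ∏ i, U i i :=
    Matrix.det_of_upperTriangular (fun i j hij => hUtri i j hij)
  have hLd : ∀ i : Fin m, L i i ≠ 0 := by
    intro i
    have := (Matrix.isUnit_iff_isUnit_det L).mp hL
    rw [hLdet] at this
    intro h
    exact this.ne_zero (Finset.prod_eq_zero (Finset.mem_univ i) h)
  have hUd : ∀ i : Fin n, U i i ≠ 0 := by
    intro i
    have := (Matrix.isUnit_iff_isUnit_det U).mp hU
    rw [hUdet] at this
    intro h
    exact this.ne_zero (Finset.prod_eq_zero (Finset.mem_univ i) h)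
  set L₁ := L.submatrix (Fin.castLE hk) (Fin.castLE hk) with hL₁
  set U₁ := U.submatrix (Fin.castLE ht) (Fin.castLE ht) with hU₁
  have hL₁det : IsUnit L₁.det := by
    have : L₁.det = ∏ i : Fin k, L (Fin.castLE hk i) (Fin.castLE hk i) :=
      Matrix.det_of_lowerTriangular L₁ (fun i j hij => hLtri _ _ (by simpa using hij))
    rw [this]
    exact (Finset.prod_ne_zero_iff.mpr (fun i _ => hLd _)).isUnit
  have hU₁det : IsUnit U₁.det := by
    have : U₁.det = ∏ i : Fin t, U (Fin.castLE ht i) (Fin.castLE ht i) :=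
      Matrix.det_of_upperTriangular (fun i j hij => hUtri _ _ (by simpa using hij))
    rw [this]
    exact (Finset.prod_ne_zero_iff.mpr (fun i _ => hUd _)).isUnit
  have key1 : (L * R * U).submatrix (Fin.castLE hk) (Fin.castLE ht)
      = L₁ * ((R * U).submatrix (Fin.castLE hk) (Fin.castLE ht)) := by
    ext i j
    simp only [Matrix.submatrix_apply, Matrix.mul_assoc, Matrix.mul_apply, hL₁]
    refine sum_castLE_aux hk _ (fun l hl => ?_)
    rw [hLtri _ _ (Fin.lt_def.mpr (lt_of_lt_of_le i.isLt hl)), zero_mul]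
  have key2 : (R * U).submatrix (Fin.castLE hk) (Fin.castLE ht)
      = (R.submatrix (Fin.castLE hk) (Fin.castLE ht)) * U₁ := by
    ext i j
    simp only [Matrix.submatrix_apply, Matrix.mul_apply, hU₁]
    refine sum_castLE_aux ht _ (fun l hl => ?_)
    rw [hUtri _ _ (Fin.lt_def.mpr (lt_of_lt_of_le j.isLt hl)), mul_zero]
  rw [key1, Matrix.rank_mul_eq_right_of_isUnit_det _ _ hL₁det, key2,
    Matrix.rank_mul_eq_left_of_isUnit_det _ _ hU₁det]
end

section
/- Suppose an m×n matrix A over a field factors as A = L̄ · R · Ū where L̄ is an invertible lower triangular m×m matrix and Ū is an invertible upper triangular n×n matrix. Then for all k ≤ m and t ≤ n, the row rank profile of the leading k×t submatrix of A equals the row rank profile of the leading k×t submatrix of R. -/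
/-!
The row rank profile of a family of rows is its list of pivots: the indices `i` whose row is not
in the span of the rows before it. The pivot rows are independent and span all rows, and a sorted
independent list of the same length that is lexicographically smaller would first deviate at a
non-pivot `y`, whose row lies in the span of the pivots before `y`, which the two lists share.

Left multiplication by an invertible lower triangular matrix preserves the span of every initial
segment of rows (its inverse is lower triangular as well), and right multiplication by an
invertible matrix moves the rows by a linear isomorphism; neither changes the pivots. By
triangularity, the leading `k × t` block of `L * R * U` is the product of the leading blocks of
`L`, `R` and `U`, and the outer two are again triangular and invertible.
-/

open Matrix

/-- `l` is the row rank profile of `A`: the lexicographically smallest sorted list of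
`rank A` row indices whose corresponding rows are linearly independent. -/
def IsRowRankProfile (F : Type*) [Field F] {m n : ℕ}
    (A : Matrix (Fin m) (Fin n) F) (l : List (Fin m)) : Prop :=
  l.Pairwise (· < ·) ∧ l.length = A.rank ∧
  LinearIndependent F (fun i : {x : Fin m // x ∈ l} => A i.val) ∧
  ∀ l' : List (Fin m), l'.Pairwise (· < ·) → l'.length = A.rank →
    LinearIndependent F (fun i : {x : Fin m // x ∈ l'} => A i.val) →
    l = l' ∨ List.Lex (· < ·) l l'

open Set Submodule

section Pivot

variable (F : Type*) [DivisionRing F] {V : Type*} [AddCommGroup V] [Module F V] {ι : Type*}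

def IsPivot [Preorder ι] (v : ι → V) (i : ι) : Prop :=
  v i ∉ span F (v '' Iio i)

variable {F}

theorem not_isPivot_iff [LinearOrder ι] {v : ι → V} {i : ι} :
    ¬IsPivot F v i ↔ span F (v '' Iic i) = span F (v '' Iio i) := by
  rw [IsPivot, not_not, ← Iio_insert, image_insert_eq, span_insert, sup_eq_right,
    span_singleton_le_iff_mem]

theorem mem_span_image_setOf_isPivot_le [LinearOrder ι] [WellFoundedLT ι] (v : ι → V)
    (j : ι) :
    v j ∈ span F (v '' {i | IsPivot F v i ∧ i ≤ j}) := by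
  induction j using WellFoundedLT.induction with
  | _ j ih =>
  by_cases hj : IsPivot F v j
  · exact subset_span ⟨j, ⟨hj, le_rfl⟩, rfl⟩
  · refine span_le.2 ?_ (not_not.1 hj)
    rintro _ ⟨i, hi : i < j, rfl⟩
    refine span_mono (image_mono ?_) (ih i hi)
    exact fun p hp => ⟨hp.1, hp.2.trans hi.le⟩

theorem span_image_setOf_isPivot [LinearOrder ι] [WellFoundedLT ι] (v : ι → V) :
    span F (v '' {i | IsPivot F v i}) = span F (range v) :=
  le_antisymm (span_mono (image_subset_range _ _)) <| span_le.2 <| range_subset_iff.2 fun j =>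
    span_mono (image_mono fun _ hi => hi.1) (mem_span_image_setOf_isPivot_le v j)

theorem linearIndepOn_setOf_isPivot [LinearOrder ι] [Finite ι] (v : ι → V) :
    LinearIndepOn F v {i | IsPivot F v i} := by
  classical
  have := Fintype.ofFinite ι
  suffices ∀ s : Finset ι, (∀ i ∈ s, IsPivot F v i) → LinearIndepOn F v s by
    simpa using this (Finset.univ.filter (IsPivot F v)) (by simp)
  intro s
  induction s using Finset.induction_on_max with
  | empty => simp
  | insert a s has ih =>
    intro hpiv
    rw [Finset.coe_insert, linearIndepOn_insert fun h => lt_irrefl a (has a h)]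
    refine ⟨ih fun i hi => hpiv i (Finset.mem_insert_of_mem hi), fun hmem => ?_⟩
    exact hpiv a (Finset.mem_insert_self a s) (span_mono (image_mono has) hmem)

theorem isPivot_iff_of_span_image_eq [LinearOrder ι] {v w : ι → V}
    (h : ∀ s : Set ι, IsLowerSet s → span F (v '' s) = span F (w '' s)) (i : ι) :
    IsPivot F v i ↔ IsPivot F w i := by
  rw [← not_iff_not, not_isPivot_iff, not_isPivot_iff, h _ (isLowerSet_Iic i),
    h _ (isLowerSet_Iio i)]

theorem isPivot_comp_iff [Preorder ι] {W : Type*} [AddCommGroup W] [Module F W] (v : ι → V)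
    {f : V →ₗ[F] W} (hf : Function.Injective f) (i : ι) :
    IsPivot F (f ∘ v) i ↔ IsPivot F v i := by
  rw [IsPivot, IsPivot, image_comp]
  exact not_congr (apply_mem_span_image_iff_mem_span hf)

end Pivot

theorem List.Lex.exists_eq_append_cons {α : Type*} {r : α → α → Prop} {l₁ l₂ : List α}
    (h : List.Lex r l₁ l₂) (hlen : l₁.length = l₂.length) :
    ∃ p a b t₁ t₂, l₁ = p ++ a :: t₁ ∧ l₂ = p ++ b :: t₂ ∧ r a b := by
  induction h with
  | nil => simp at hlen
  | @cons c _ _ _ ih =>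
    obtain ⟨p, a, b, t₁, t₂, rfl, rfl, hab⟩ := ih (by simpa using hlen)
    exact ⟨c :: p, a, b, t₁, t₂, rfl, rfl, hab⟩
  | @rel a t₁ b t₂ hab => exact ⟨[], a, b, t₁, t₂, rfl, rfl, hab⟩

section RowProfile

variable (F : Type*) [DivisionRing F] {V : Type*} [AddCommGroup V] [Module F V] {k : ℕ}

open scoped Classical in
noncomputable def rowProfile (v : Fin k → V) : List (Fin k) :=
  (List.finRange k).filter (IsPivot F v ·)

variable {F}

theorem mem_rowProfile {v : Fin k → V} {i : Fin k} : i ∈ rowProfile F v ↔ IsPivot F v i := by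
  simp [rowProfile]

theorem pairwise_rowProfile (v : Fin k → V) : (rowProfile F v).Pairwise (· < ·) :=
  (List.pairwise_lt_finRange k).sublist List.filter_sublist

theorem linearIndepOn_rowProfile (v : Fin k → V) :
    LinearIndepOn F v {i | i ∈ rowProfile F v} := by
  simpa only [mem_rowProfile] using linearIndepOn_setOf_isPivot v

theorem length_rowProfile (v : Fin k → V) :
    (rowProfile F v).length = Module.finrank F (span F (range v)) := by
  have hset : {i | IsPivot F v i} = {i | i ∈ rowProfile F v} := by simp only [mem_rowProfile]
  rw [← span_image_setOf_isPivot, hset, image_eq_range,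
    finrank_span_eq_card (linearIndepOn_rowProfile v)]
  simp only [← List.coe_toFinset, Finset.coe_sort_coe, Fintype.card_coe,
    List.toFinset_card_of_nodup (pairwise_rowProfile v).nodup]

theorem rowProfile_le (v : Fin k → V) {l : List (Fin k)} (hl : l.Pairwise (· < ·))
    (hlen : l.length = (rowProfile F v).length) (hind : LinearIndepOn F v {i | i ∈ l}) :
    rowProfile F v ≤ l := by
  refine not_lt.1 fun hlt => ?_
  obtain ⟨p, y, x, l', g', rfl, hg, hyx⟩ :=
    List.Lex.exists_eq_append_cons (r := (· < ·)) hlt hlen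
  have hsorted := pairwise_rowProfile (F := F) v
  rw [hg, List.pairwise_append, List.pairwise_cons] at hsorted
  have hpivot_le : ∀ j, IsPivot F v j → j ≤ y → j ∈ p := by
    intro j hj hjy
    rw [← mem_rowProfile, hg, List.mem_append, List.mem_cons] at hj
    rcases hj with hjp | rfl | hjg
    · exact hjp
    · exact absurd hyx hjy.not_gt
    · exact absurd (hyx.trans (hsorted.2.1.1 j hjg)) hjy.not_gt
  have hyp : y ∉ p := fun hy =>
    lt_irrefl y ((List.pairwise_append.1 hl).2.2 y hy y List.mem_cons_self)
  have hmem : v y ∈ span F (v '' {j | j ∈ p}) :=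
    span_mono (image_mono fun j hj => hpivot_le j hj.1 hj.2) (mem_span_image_setOf_isPivot_le v y)
  have hind' : LinearIndepOn F v (insert y {j | j ∈ p}) :=
    hind.mono (insert_subset_iff.2
      ⟨List.mem_append_right p List.mem_cons_self, fun _ hj => List.mem_append_left _ hj⟩)
  exact ((linearIndepOn_insert (s := {j | j ∈ p}) hyp).1 hind').2 hmem

end RowProfile

theorem isRowRankProfile_iff_eq_rowProfile {F : Type*} [Field F] {m n : ℕ}
    (A : Matrix (Fin m) (Fin n) F) (l : List (Fin m)) :
    IsRowRankProfile F A l ↔ l = rowProfile F A.row := by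
  have hlen : ∀ l' : List (Fin m),
      l'.length = A.rank ↔ l'.length = (rowProfile F A.row).length := fun l' => by
    rw [length_rowProfile, rank_eq_finrank_span_row]
  constructor
  · rintro ⟨hl, hl_len, hind, hmin⟩
    rcases hmin _ (pairwise_rowProfile _) ((hlen _).2 rfl) (linearIndepOn_rowProfile _) with h | h
    · exact h
    · exact absurd h (not_lt.2 (rowProfile_le _ hl ((hlen l).1 hl_len) hind))
  · rintro rfl
    exact ⟨pairwise_rowProfile _, (hlen _).2 rfl, linearIndepOn_rowProfile _,
      fun l' hl' hl'_len hind' => (rowProfile_le _ hl' ((hlen l').1 hl'_len) hind').eq_or_lt⟩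

section Triangular

variable {R : Type*} {ι κ : Type*}

theorem span_image_row_mul_le_of_isLowerTriangular [Semiring R] [Fintype ι] [LinearOrder ι]
    {L : Matrix ι ι R} (hL : L.IsLowerTriangular) (M : Matrix ι κ R) {s : Set ι}
    (hs : IsLowerSet s) : span R ((L * M).row '' s) ≤ span R (M.row '' s) := by
  refine span_le.2 ?_
  rintro _ ⟨i, hi, rfl⟩
  rw [SetLike.mem_coe, row_apply', mul_apply_eq_vecMul, vecMul_eq_sum]
  refine sum_mem fun j _ => ?_
  rcases le_or_gt j i with hji | hij
  · exact smul_mem _ _ (subset_span ⟨j, hs hji hi, rfl⟩)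
  · rw [hL hij, zero_smul]
    exact zero_mem _

theorem span_image_row_mul_of_isLowerTriangular [CommRing R] [Fintype ι] [LinearOrder ι]
    {L : Matrix ι ι R} (hL : L.IsLowerTriangular) (hLu : IsUnit L) (M : Matrix ι κ R)
    {s : Set ι} (hs : IsLowerSet s) : span R ((L * M).row '' s) = span R (M.row '' s) := by
  classical
  have := hLu.invertible
  refine le_antisymm (span_image_row_mul_le_of_isLowerTriangular hL M hs) ?_
  simpa [← Matrix.mul_assoc] using span_image_row_mul_le_of_isLowerTriangular
    (blockTriangular_inv_of_blockTriangular hL) (L * M) hs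

theorem Matrix.IsLowerTriangular.submatrix_castLE [Zero R] {m k : ℕ} (hk : k ≤ m)
    {L : Matrix (Fin m) (Fin m) R} (hL : L.IsLowerTriangular) :
    (L.submatrix (Fin.castLE hk) (Fin.castLE hk)).IsLowerTriangular :=
  fun _ _ h => hL h

theorem submatrix_castLE_mul_of_isLowerTriangular [NonUnitalNonAssocSemiring R] {m k : ℕ}
    (hk : k ≤ m) {L : Matrix (Fin m) (Fin m) R} (hL : L.IsLowerTriangular)
    (M : Matrix (Fin m) κ R) (c : ι → κ) :
    (L * M).submatrix (Fin.castLE hk) c =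
      L.submatrix (Fin.castLE hk) (Fin.castLE hk) * M.submatrix (Fin.castLE hk) c := by
  ext i j
  simp only [submatrix_apply, mul_apply]
  refine (Finset.sum_of_injOn (Fin.castLE hk) (Fin.castLE_injective hk).injOn
    (fun _ _ => Finset.mem_univ _) (fun q _ hq => ?_) (fun _ _ => rfl)).symm
  have hkq : k ≤ q := by
    by_contra! h
    exact hq ⟨⟨q, h⟩, Finset.mem_coe.2 (Finset.mem_univ _), rfl⟩
  exact mul_eq_zero_of_left (hL (show i.val < q.val by omega)) _

theorem submatrix_mul_castLE_of_isUpperTriangular [CommSemiring R] {n t : ℕ}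
    (ht : t ≤ n) {U : Matrix (Fin n) (Fin n) R} (hU : U.IsUpperTriangular)
    (M : Matrix κ (Fin n) R) (r : ι → κ) :
    (M * U).submatrix r (Fin.castLE ht) =
      M.submatrix r (Fin.castLE ht) * U.submatrix (Fin.castLE ht) (Fin.castLE ht) := by
  rw [← transpose_inj]
  simpa only [transpose_submatrix, transpose_mul] using
    submatrix_castLE_mul_of_isLowerTriangular ht hU.transpose Mᵀ r

theorem isUnit_submatrix_castLE_of_isLowerTriangular [CommRing R] {m k : ℕ} (hk : k ≤ m)
    {L : Matrix (Fin m) (Fin m) R} (hL : L.IsLowerTriangular) (hLu : IsUnit L) :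
    IsUnit (L.submatrix (Fin.castLE hk) (Fin.castLE hk)) := by
  rw [isUnit_iff_isUnit_det, det_of_isLowerTriangular _ hL, IsUnit.prod_univ_iff] at hLu
  rw [isUnit_iff_isUnit_det, det_of_isLowerTriangular _ (hL.submatrix_castLE hk),
    IsUnit.prod_univ_iff]
  exact fun i => hLu _

theorem isUnit_submatrix_castLE_of_isUpperTriangular [CommRing R] {n t : ℕ} (ht : t ≤ n)
    {U : Matrix (Fin n) (Fin n) R} (hU : U.IsUpperTriangular) (hUu : IsUnit U) :
    IsUnit (U.submatrix (Fin.castLE ht) (Fin.castLE ht)) := by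
  rw [← isUnit_transpose, transpose_submatrix]
  exact isUnit_submatrix_castLE_of_isLowerTriangular ht hU.transpose ((isUnit_transpose U).2 hUu)

end Triangular

section MatrixPivot

variable {F : Type*} [Field F] {ι κ : Type*}

theorem isPivot_row_mul_iff_of_isLowerTriangular [Fintype ι] [LinearOrder ι]
    {L : Matrix ι ι F} (hL : L.IsLowerTriangular) (hLu : IsUnit L) (M : Matrix ι κ F) (i : ι) :
    IsPivot F (L * M).row i ↔ IsPivot F M.row i :=
  isPivot_iff_of_span_image_eq (fun _ hs => span_image_row_mul_of_isLowerTriangular hL hLu M hs) i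

theorem isPivot_row_mul_iff_of_isUnit [Preorder ι] [Fintype κ] [DecidableEq κ]
    (M : Matrix ι κ F) {U : Matrix κ κ F} (hU : IsUnit U) (i : ι) :
    IsPivot F (M * U).row i ↔ IsPivot F M.row i :=
  isPivot_comp_iff M.row (f := U.vecMulLinear) (vecMul_injective_of_isUnit hU) i

theorem rowProfile_row_mul_mul_of_isLowerTriangular {k : ℕ} [Fintype κ] [DecidableEq κ]
    {L : Matrix (Fin k) (Fin k) F} (hL : L.IsLowerTriangular) (hLu : IsUnit L)
    (M : Matrix (Fin k) κ F) {U : Matrix κ κ F} (hU : IsUnit U) :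
    rowProfile F (L * M * U).row = rowProfile F M.row := by
  refine List.filter_congr fun i _ => decide_eq_decide.2 ?_
  exact (isPivot_row_mul_iff_of_isUnit _ hU i).trans
    (isPivot_row_mul_iff_of_isLowerTriangular hL hLu M i)

end MatrixPivot

theorem rowRankProfile_leading_submatrix_of_LRU (F : Type*) [Field F] {m n : ℕ}
    (A R : Matrix (Fin m) (Fin n) F)
    (L : Matrix (Fin m) (Fin m) F) (U : Matrix (Fin n) (Fin n) F)
    (hLtri : ∀ i j : Fin m, i < j → L i j = 0) (hL : IsUnit L)
    (hUtri : ∀ i j : Fin n, j < i → U i j = 0) (hU : IsUnit U)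
    (hA : A = L * R * U) :
    ∀ (k t : ℕ) (hk : k ≤ m) (ht : t ≤ n) (l : List (Fin k)),
      IsRowRankProfile F (A.submatrix (Fin.castLE hk) (Fin.castLE ht)) l ↔
      IsRowRankProfile F (R.submatrix (Fin.castLE hk) (Fin.castLE ht)) l := by
  intro k t hk ht l
  have hLlow : L.IsLowerTriangular := fun i j h => hLtri i j h
  have hUup : U.IsUpperTriangular := fun i j h => hUtri i j h
  have hlead : A.submatrix (Fin.castLE hk) (Fin.castLE ht) =
      L.submatrix (Fin.castLE hk) (Fin.castLE hk) * R.submatrix (Fin.castLE hk) (Fin.castLE ht) *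
        U.submatrix (Fin.castLE ht) (Fin.castLE ht) := by
    rw [hA, Matrix.mul_assoc, submatrix_castLE_mul_of_isLowerTriangular hk hLlow,
      submatrix_mul_castLE_of_isUpperTriangular ht hUup, Matrix.mul_assoc]
  rw [isRowRankProfile_iff_eq_rowProfile, isRowRankProfile_iff_eq_rowProfile, hlead,
    rowProfile_row_mul_mul_of_isLowerTriangular (hLlow.submatrix_castLE hk)
      (isUnit_submatrix_castLE_of_isLowerTriangular hk hLlow hL) _
      (isUnit_submatrix_castLE_of_isUpperTriangular ht hUup hU)]
end

section
/- Let A be an m×n matrix over a field with decomposition A = P [L; M] [U V] Q where P, Q are permutation matrices, L is r×r unit lower triangular, U is r×r upper triangular invertible, M is (m−r)×r, V is r×(n−r), and suppose that L̄ := P [[L, 0],[M, I_{m−r}]] Pᵀ is lower triangular and Ū := Qᵀ [[U, V],[0, I_{n−r}]] Q is upper triangular. Then A = L̄ E Ū where E := P [[I_r, 0],[0, 0]] Q, i.e., this yields an LEU decomposition of A: L̄ unit lower triangular invertible, Ū upper triangular invertible, and E a matrix which is a permutation of the r×r identity embedded in an m×n zero matrix. -/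
open Matrix

/-- Extend an `m × r` "[L; M]" matrix to the `m × m` matrix `[[L,0],[M,I]]`. -/
def extLow {F : Type*} [Field F] {m r : ℕ} (_ : r ≤ m)
    (Y : Matrix (Fin m) (Fin r) F) : Matrix (Fin m) (Fin m) F :=
  Matrix.of fun i j => if h : (j : ℕ) < r then Y i ⟨j, h⟩ else if i = j then 1 else 0

/-- Extend an `r × n` "[U V]" matrix to the `n × n` matrix `[[U,V],[0,I]]`. -/
def extUp {F : Type*} [Field F] {n r : ℕ} (_ : r ≤ n)
    (Z : Matrix (Fin r) (Fin n) F) : Matrix (Fin n) (Fin n) F :=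
  Matrix.of fun i j => if h : (i : ℕ) < r then Z ⟨i, h⟩ j else if i = j then 1 else 0

/-- The `m × n` matrix `[[I_r, 0], [0, 0]]`. -/
def embedIdMat (F : Type*) [Field F] (m n r : ℕ) : Matrix (Fin m) (Fin n) F :=
  Matrix.of fun i j => if (i : ℕ) = (j : ℕ) ∧ (i : ℕ) < r then 1 else 0


section Aux
variable {F : Type*} [Field F] {m n r : ℕ}

lemma extLow_mul_embed (hrm : r ≤ m) (hrn : r ≤ n) (Y : Matrix (Fin m) (Fin r) F) :
    extLow hrm Y * embedIdMat F m n r =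
      Matrix.of (fun i (j : Fin n) => if h : (j : ℕ) < r then Y i ⟨j, h⟩ else 0) := by
  ext i j
  rw [Matrix.mul_apply]
  by_cases h : (j : ℕ) < r
  · rw [Finset.sum_eq_single (⟨(j : ℕ), h.trans_le hrm⟩ : Fin m)]
    · simp [extLow, embedIdMat, h]
    · intro k _ hk
      have : ¬((k : ℕ) = (j : ℕ) ∧ (k : ℕ) < r) := by
        rintro ⟨h1, _⟩
        exact hk (Fin.ext h1)
      simp [embedIdMat, this]
    · intro h'; exact absurd (Finset.mem_univ _) h'
  · have : ∀ k : Fin m, extLow hrm Y i k * embedIdMat F m n r k j = 0 := by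
      intro k
      have : ¬((k : ℕ) = (j : ℕ) ∧ (k : ℕ) < r) := by
        rintro ⟨h1, h2⟩; exact h (h1 ▸ h2)
      simp [embedIdMat, this]
    simp [this, h]

lemma key_prod (hrm : r ≤ m) (hrn : r ≤ n) (Y : Matrix (Fin m) (Fin r) F)
    (Z : Matrix (Fin r) (Fin n) F) :
    extLow hrm Y * embedIdMat F m n r * extUp hrn Z = Y * Z := by
  rw [extLow_mul_embed hrm hrn]
  ext i j
  rw [Matrix.mul_apply, Matrix.mul_apply]
  have step : ∀ k : Fin n,
      Matrix.of (fun i (j : Fin n) => if h : (j : ℕ) < r then Y i ⟨j, h⟩ else 0) i k *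
        extUp hrn Z k j
        = if h : (k : ℕ) < r then Y i ⟨k, h⟩ * Z ⟨k, h⟩ j else 0 := by
    intro k
    by_cases h : (k : ℕ) < r <;> simp [extUp, h]
  simp only [step]
  have : ∑ k : Fin n, (if h : (k : ℕ) < r then Y i ⟨k, h⟩ * Z ⟨k, h⟩ j else 0)
      = ∑ k ∈ Finset.range n, (if h : k < r then Y i ⟨k, h⟩ * Z ⟨k, h⟩ j else 0) :=
    Fin.sum_univ_eq_sum_range (fun k => if h : k < r then Y i ⟨k, h⟩ * Z ⟨k, h⟩ j else 0) n
  rw [this, ← Finset.sum_subset (Finset.range_subset_range.mpr hrn)]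
  · rw [← Fin.sum_univ_eq_sum_range (fun k => if h : k < r then Y i ⟨k, h⟩ * Z ⟨k, h⟩ j else 0) r]
    apply Finset.sum_congr rfl
    intro k _
    simp
  · intro k _ hk
    have : ¬ k < r := by simpa using hk
    simp [this]

end Aux

theorem pluq_to_leu (F : Type*) [Field F] {m n r : ℕ} (hrm : r ≤ m) (hrn : r ≤ n)
    (A : Matrix (Fin m) (Fin n) F)
    (σ : Equiv.Perm (Fin m)) (τ : Equiv.Perm (Fin n))
    (Y : Matrix (Fin m) (Fin r) F) (Z : Matrix (Fin r) (Fin n) F)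
    -- `Y = [L; M]` with `L` unit lower triangular
    (hYtri : ∀ (i : Fin m) (j : Fin r), (i : ℕ) < (j : ℕ) → Y i j = 0)
    (hYdiag : ∀ j : Fin r, Y (Fin.castLE hrm j) j = 1)
    -- `Z = [U V]` with `U` upper triangular with nonzero diagonal
    (hZtri : ∀ i j : Fin r, (j : ℕ) < (i : ℕ) → Z i (Fin.castLE hrn j) = 0)
    (hZdiag : ∀ i : Fin r, Z i (Fin.castLE hrn i) ≠ 0)
    -- the PLUQ decomposition  A = P [L;M] [U V] Q
    (hA : A = σ.permMatrix F * Y * Z * τ.permMatrix F)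
    -- L̄ := P [[L,0],[M,I]] Pᵀ is lower triangular
    (hLbar : ∀ i j : Fin m, i < j →
      (σ.permMatrix F * extLow hrm Y * (σ.permMatrix F)ᵀ) i j = 0)
    -- Ū := Qᵀ [[U,V],[0,I]] Q is upper triangular
    (hUbar : ∀ i j : Fin n, j < i →
      ((τ.permMatrix F)ᵀ * extUp hrn Z * τ.permMatrix F) i j = 0) :
    A = (σ.permMatrix F * extLow hrm Y * (σ.permMatrix F)ᵀ) *
        (σ.permMatrix F * embedIdMat F m n r * τ.permMatrix F) *
        ((τ.permMatrix F)ᵀ * extUp hrn Z * τ.permMatrix F) ∧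
    (∀ i : Fin m, (σ.permMatrix F * extLow hrm Y * (σ.permMatrix F)ᵀ) i i = 1) ∧
    IsUnit (σ.permMatrix F * extLow hrm Y * (σ.permMatrix F)ᵀ) ∧
    IsUnit ((τ.permMatrix F)ᵀ * extUp hrn Z * τ.permMatrix F) ∧
    (∀ (i : Fin m) (j : Fin n),
      (σ.permMatrix F * embedIdMat F m n r * τ.permMatrix F) i j = 0 ∨
      (σ.permMatrix F * embedIdMat F m n r * τ.permMatrix F) i j = 1) ∧
    (∀ (i : Fin m) (j j' : Fin n),
      (σ.permMatrix F * embedIdMat F m n r * τ.permMatrix F) i j ≠ 0 →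
      (σ.permMatrix F * embedIdMat F m n r * τ.permMatrix F) i j' ≠ 0 → j = j') ∧
    (∀ (j : Fin n) (i i' : Fin m),
      (σ.permMatrix F * embedIdMat F m n r * τ.permMatrix F) i j ≠ 0 →
      (σ.permMatrix F * embedIdMat F m n r * τ.permMatrix F) i' j ≠ 0 → i = i') := by

  -- abbreviations
  set P := σ.permMatrix F with hP
  set Q := τ.permMatrix F with hQ
  have hPt : Pᵀ = (σ⁻¹).permMatrix F := by
    show _ = (σ⁻¹).toPEquiv.toMatrix
    rw [Equiv.Perm.inv_def, Equiv.toPEquiv_symm, PEquiv.toMatrix_symm]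
  have hQt : Qᵀ = (τ⁻¹).permMatrix F := by
    show _ = (τ⁻¹).toPEquiv.toMatrix
    rw [Equiv.Perm.inv_def, Equiv.toPEquiv_symm, PEquiv.toMatrix_symm]
  have h1 : Pᵀ * P = 1 := by
    rw [hPt]
    show (σ⁻¹).toPEquiv.toMatrix * σ.toPEquiv.toMatrix = 1
    rw [PEquiv.toMatrix_toPEquiv_mul]
    ext i j
    simp [PEquiv.toMatrix_apply, Equiv.toPEquiv_apply, Matrix.one_apply]
  have h2 : Q * Qᵀ = 1 := by
    rw [hQt]
    show τ.toPEquiv.toMatrix * (τ⁻¹).toPEquiv.toMatrix = 1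
    rw [PEquiv.toMatrix_toPEquiv_mul]
    ext i j
    simp [PEquiv.toMatrix_apply, Equiv.toPEquiv_apply, Matrix.one_apply]
  have hLbar_eq : P * extLow hrm Y * Pᵀ = (extLow hrm Y).submatrix σ σ := by
    rw [hPt]
    show σ.toPEquiv.toMatrix * _ * (σ⁻¹).toPEquiv.toMatrix = _
    rw [PEquiv.toMatrix_toPEquiv_mul, PEquiv.mul_toMatrix_toPEquiv]
    simp [Matrix.submatrix_submatrix, Equiv.Perm.inv_def]
  have hUbar_eq : Qᵀ * extUp hrn Z * Q = (extUp hrn Z).submatrix (⇑τ.symm) (⇑τ.symm) := by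
    rw [hQt]
    show (τ⁻¹).toPEquiv.toMatrix * _ * τ.toPEquiv.toMatrix = _
    rw [PEquiv.toMatrix_toPEquiv_mul, PEquiv.mul_toMatrix_toPEquiv]
    simp [Matrix.submatrix_submatrix, Equiv.Perm.inv_def]
  have hE_eq : P * embedIdMat F m n r * Q = (embedIdMat F m n r).submatrix σ (⇑τ.symm) := by
    show σ.toPEquiv.toMatrix * _ * τ.toPEquiv.toMatrix = _
    rw [PEquiv.toMatrix_toPEquiv_mul, PEquiv.mul_toMatrix_toPEquiv]
    simp [Matrix.submatrix_submatrix]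
  refine ⟨?_, ?_, ?_, ?_, ?_, ?_, ?_⟩
  · -- the decomposition
    rw [hA]
    simp only [Matrix.mul_assoc]
    rw [← Matrix.mul_assoc Pᵀ P, h1, Matrix.one_mul,
        ← Matrix.mul_assoc Q Qᵀ, h2, Matrix.one_mul]
    congr 1
    rw [← Matrix.mul_assoc (extLow hrm Y) (embedIdMat F m n r) (extUp hrn Z * Q),
        ← Matrix.mul_assoc (extLow hrm Y * embedIdMat F m n r) (extUp hrn Z) Q,
        key_prod hrm hrn, Matrix.mul_assoc]
  · -- unit diagonal
    intro i
    rw [hLbar_eq, Matrix.submatrix_apply]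
    by_cases h : ((σ i : Fin m) : ℕ) < r
    · have := hYdiag ⟨((σ i : Fin m) : ℕ), h⟩
      have hc : Fin.castLE hrm (⟨((σ i : Fin m) : ℕ), h⟩ : Fin r) = σ i := Fin.ext rfl
      rw [hc] at this
      simpa [extLow, h] using this
    · simp [extLow, h]
  · -- L̄ is a unit
    have hdet : (P * extLow hrm Y * Pᵀ).det = ∏ i, (P * extLow hrm Y * Pᵀ) i i :=
      Matrix.det_of_lowerTriangular _ (fun i j h => hLbar i j (by exact h))
    apply (Matrix.isUnit_iff_isUnit_det _).mpr
    rw [hdet]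
    have hdiag : ∀ i, (P * extLow hrm Y * Pᵀ) i i = 1 := by
      intro i
      rw [hLbar_eq, Matrix.submatrix_apply]
      by_cases h : ((σ i : Fin m) : ℕ) < r
      · have := hYdiag ⟨((σ i : Fin m) : ℕ), h⟩
        have hc : Fin.castLE hrm (⟨((σ i : Fin m) : ℕ), h⟩ : Fin r) = σ i := Fin.ext rfl
        rw [hc] at this
        simpa [extLow, h] using this
      · simp [extLow, h]
    simp [hdiag]
  · -- Ū is a unit
    have hdet : (Qᵀ * extUp hrn Z * Q).det = ∏ i, (Qᵀ * extUp hrn Z * Q) i i :=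
      Matrix.det_of_upperTriangular (fun i j h => hUbar i j (by exact h))
    apply (Matrix.isUnit_iff_isUnit_det _).mpr
    rw [hdet]
    have hdiag : ∀ i, (Qᵀ * extUp hrn Z * Q) i i ≠ 0 := by
      intro i
      rw [hUbar_eq, Matrix.submatrix_apply]
      by_cases h : ((τ.symm i : Fin n) : ℕ) < r
      · have := hZdiag ⟨((τ.symm i : Fin n) : ℕ), h⟩
        have hc : Fin.castLE hrn (⟨((τ.symm i : Fin n) : ℕ), h⟩ : Fin r) = τ.symm i :=
          Fin.ext rfl
        rw [hc] at this
        simpa [extUp, h] using this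
      · simp [extUp, h]
    exact isUnit_iff_ne_zero.mpr (Finset.prod_ne_zero_iff.mpr (fun i _ => hdiag i))
  · -- entries of E are 0 or 1
    intro i j
    rw [hE_eq, Matrix.submatrix_apply]
    by_cases h : ((σ i : Fin m) : ℕ) = ((τ.symm j : Fin n) : ℕ) ∧ ((σ i : Fin m) : ℕ) < r
    · right; simp only [embedIdMat, Matrix.of_apply, if_pos h]
    · left; simp only [embedIdMat, Matrix.of_apply, if_neg h]
  · -- at most one nonzero per row
    intro i j j' hj hj'
    rw [hE_eq, Matrix.submatrix_apply] at hj hj'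
    by_cases h : ((σ i : Fin m) : ℕ) = ((τ.symm j : Fin n) : ℕ) ∧ ((σ i : Fin m) : ℕ) < r
    · by_cases h' : ((σ i : Fin m) : ℕ) = ((τ.symm j' : Fin n) : ℕ) ∧ ((σ i : Fin m) : ℕ) < r
      · have : τ.symm j = τ.symm j' := Fin.ext (h.1.symm.trans h'.1)
        exact τ.symm.injective this
      · exact absurd (by simp only [embedIdMat, Matrix.of_apply, if_neg h']) hj'
    · exact absurd (by simp only [embedIdMat, Matrix.of_apply, if_neg h]) hj
  · -- at most one nonzero per column
    intro j i i' hi hi'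
    rw [hE_eq, Matrix.submatrix_apply] at hi hi'
    by_cases h : ((σ i : Fin m) : ℕ) = ((τ.symm j : Fin n) : ℕ) ∧ ((σ i : Fin m) : ℕ) < r
    · by_cases h' : ((σ i' : Fin m) : ℕ) = ((τ.symm j : Fin n) : ℕ) ∧ ((σ i' : Fin m) : ℕ) < r
      · have : σ i = σ i' := Fin.ext (h.1.trans h'.1.symm)
        exact σ.injective this
      · exact absurd (by simp only [embedIdMat, Matrix.of_apply, if_neg h']) hi'
    · exact absurd (by simp only [embedIdMat, Matrix.of_apply, if_neg h]) hi
end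

section
/- Let A = L̄ E Ū be a factorization of an m×n matrix A over a field, where L̄ is invertible unit lower triangular, Ū is invertible upper triangular, and E is an m×n 0-1 matrix with at most one 1 in each row and each column. Then the row rank profile of A is the sorted sequence of row indices of the nonzero rows of E, and the column rank profile of A is the sorted sequence of column indices of the nonzero columns of E. -/
open Matrix

/-- `l` is the column rank profile of `A`. -/
def IsColRankProfile (F : Type*) [Field F] {m n : ℕ}
    (A : Matrix (Fin m) (Fin n) F) (l : List (Fin n)) : Prop :=
  l.Pairwise (· < ·) ∧ l.length = A.rank ∧
  LinearIndependent F (fun j : {x : Fin n // x ∈ l} => Aᵀ j.val) ∧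
  ∀ l' : List (Fin n), l'.Pairwise (· < ·) → l'.length = A.rank →
    LinearIndependent F (fun j : {x : Fin n // x ∈ l'} => Aᵀ j.val) →
    l = l' ∨ List.Lex (· < ·) l l'

/-!
The rows of `L * E * U` indexed by the set `S` of nonzero rows of `E` are linearly independent: a
vanishing combination `c` of them gives `(c ᵥ* L) ᵥ* E = 0`, so `c ᵥ* L` vanishes on `S`, which at the
last index `i` of the support of `c` reads `c i * L i i = 0`. As `L` is lower triangular, row `x` of
`L * E * U` lies in the span of the at most `#{k ∈ S | k ≤ x}` nonzero rows `k ≤ x` of `E * U`. Hence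
independent rows at or above row `b` number at most `#{k ∈ S | k ≤ b}`, so `rank A = #S` and the
`k`-th entry of any sorted list of `rank A` independent rows is at least the `k`-th element of `S`.
Columns follow by transposing, `Aᵀ = Uᵀ * Eᵀ * Lᵀ`.
-/

open Finset Submodule Module

namespace List

theorem eq_or_lex_of_forall_getElem_le {α : Type*} [LinearOrder α] :
    ∀ {l l' : List α} (hlen : l.length = l'.length),
      (∀ (k : ℕ) (hk : k < l.length), l[k] ≤ l'[k]) → l = l' ∨ List.Lex (· < ·) l l'
  | [], [], _, _ => .inl rfl
  | a :: t, a' :: t', hlen, h => by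
    obtain hlt | rfl := (h 0 (by simp)).lt_or_eq
    · exact .inr (.rel hlt)
    · obtain rfl | hlex := eq_or_lex_of_forall_getElem_le (l := t) (l' := t')
        (by simpa using hlen) fun k hk => h (k + 1) (Nat.succ_lt_succ hk)
      · exact .inl rfl
      · exact .inr (.cons hlex)

end List

namespace Finset

theorem getElem_sort_le_getElem_sort_of_subset {α : Type*} [LinearOrder α] {S T : Finset α}
    (hTS : T ⊆ S) {k : ℕ} (hk : k < #T) :
    (S.sort (· ≤ ·))[k]'(by simpa using hk.trans_le (card_le_card hTS)) ≤
      (T.sort (· ≤ ·))[k]'(by simpa using hk) := by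
  have hsub : (T.sort (· ≤ ·)).Sublist (S.sort (· ≤ ·)) :=
    List.sublist_of_subperm_of_sortedLE
      (List.subperm_of_subset (T.sort_nodup _) fun x => by simpa using @hTS x)
      T.sortedLT_sort.sortedLE S.sortedLT_sort.sortedLE
  obtain ⟨f, hf⟩ := List.sublist_iff_exists_orderEmbedding_getElem?_eq.mp hsub
  obtain ⟨hfk, hfk'⟩ := List.getElem?_eq_some_iff.mp ((hf k).symm.trans
    (List.getElem?_eq_getElem (by simpa using hk)))
  rw [← hfk']
  exact S.sortedLT_sort.sortedLE.monotone_get (Fin.mk_le_mk.mpr (f.strictMono.id_le k))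

end Finset

section RankProfile

variable {F : Type*} [Field F]

theorem finrank_span_image_finset_le_card {ι M : Type*} [AddCommGroup M] [Module F M]
    (v : ι → M) (T : Finset ι) : finrank F (span F (v '' T)) ≤ #T := by
  classical
  rw [← coe_image]
  exact (finrank_span_finset_le_card _).trans card_image_le

theorem LinearIndepOn.card_le_finrank_span_image {ι M : Type*} [AddCommGroup M] [Module F M]
    {a : ι → M} {T : Finset ι} (hT : LinearIndepOn F a T) : #T ≤ finrank F (span F (a '' T)) := by
  rw [Set.image_eq_range]
  simpa [Set.finrank] using linearIndependent_iff_card_le_finrank_span.mp hT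

theorem card_le_card_filter_le_of_mem_span {ι M : Type*} [LinearOrder ι] [AddCommGroup M]
    [Module F M] {a v : ι → M} {S : Finset ι} (hspan : ∀ x, a x ∈ span F (v '' ↑{k ∈ S | k ≤ x}))
    {T : Finset ι} {b : ι} (hTb : ∀ x ∈ T, x ≤ b) (hT : LinearIndepOn F a T) :
    #T ≤ #{k ∈ S | k ≤ b} := by
  have hle : span F (a '' T) ≤ span F (v '' ↑{k ∈ S | k ≤ b}) := by
    refine span_le.mpr ?_
    rintro _ ⟨x, hx, rfl⟩
    refine span_mono (Set.image_mono fun k hk => ?_) (hspan x)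
    simp only [coe_filter, Set.mem_ofPred_eq] at hk ⊢
    exact ⟨hk.1, hk.2.trans (hTb x hx)⟩
  have : FiniteDimensional F (span F (v '' ↑{k ∈ S | k ≤ b})) :=
    FiniteDimensional.span_of_finite F ((finite_toSet _).image v)
  calc #T ≤ finrank F (span F (a '' T)) := hT.card_le_finrank_span_image
    _ ≤ finrank F (span F (v '' ↑{k ∈ S | k ≤ b})) := finrank_mono hle
    _ ≤ #{k ∈ S | k ≤ b} := finrank_span_image_finset_le_card v _

variable {m n : ℕ} {A : Matrix (Fin m) (Fin n) F} {S : Finset (Fin m)} (v : Fin m → Fin n → F)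

theorem rank_eq_card_of_mem_span (hind : LinearIndepOn F A.row S)
    (hspan : ∀ x, A.row x ∈ span F (v '' ↑{k ∈ S | k ≤ x})) : A.rank = #S := by
  have : FiniteDimensional F (span F (v '' S)) :=
    FiniteDimensional.span_of_finite F ((finite_toSet _).image v)
  have hrange : span F (Set.range A.row) ≤ span F (v '' S) := by
    refine span_le.mpr ?_
    rintro _ ⟨x, rfl⟩
    exact span_mono (Set.image_mono (by simp +contextual [Set.subset_def])) (hspan x)
  rw [rank_eq_finrank_span_row]
  refine le_antisymm ((finrank_mono hrange).trans (finrank_span_image_finset_le_card v S)) ?_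
  exact hind.card_le_finrank_span_image.trans
    (finrank_mono (span_mono (Set.image_subset_range _ _)))

theorem isRowRankProfile_sort_of_mem_span (hind : LinearIndepOn F A.row S)
    (hspan : ∀ x, A.row x ∈ span F (v '' ↑{k ∈ S | k ≤ x})) :
    IsRowRankProfile F A (S.sort (· ≤ ·)) := by
  have hrank := rank_eq_card_of_mem_span v hind hspan
  refine ⟨S.sortedLT_sort.pairwise, by rw [length_sort, hrank], ?_, fun l' hl' hlen hind' => ?_⟩
  · exact hind.mono fun x hx => (mem_sort _).mp hx
  refine List.eq_or_lex_of_forall_getElem_le (by rw [length_sort, hlen, hrank]) fun k hk => ?_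
  have hk' : k < l'.length := by simpa [hlen, hrank] using hk
  set T := (l'.take (k + 1)).toFinset
  have hTcard : #T = k + 1 := by
    rw [List.toFinset_card_of_nodup ((List.take_sublist _ _).nodup hl'.nodup), List.length_take]
    omega
  have hTb : ∀ x ∈ T, x ≤ l'[k] := by
    intro x hx
    obtain ⟨i, hi, rfl⟩ := List.mem_take_iff_getElem.mp (List.mem_toFinset.mp hx)
    exact hl'.sortedLT.sortedLE.monotone_get (Fin.mk_le_mk.mpr (by omega))
  have hTind : LinearIndepOn F A.row T :=
    LinearIndepOn.mono hind' fun x hx => List.mem_of_mem_take (List.mem_toFinset.mp hx)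
  have hcard := card_le_card_filter_le_of_mem_span hspan hTb hTind
  calc (S.sort (· ≤ ·))[k] ≤ ({x ∈ S | x ≤ l'[k]}.sort (· ≤ ·))[k]'(by rw [length_sort]; omega) :=
        getElem_sort_le_getElem_sort_of_subset (filter_subset _ _) (by omega)
    _ ≤ l'[k] := (mem_filter.mp ((mem_sort _).mp
          (List.getElem_mem (l := {x ∈ S | x ≤ l'[k]}.sort (· ≤ ·)) _))).2

theorem isColRankProfile_iff_isRowRankProfile_transpose {l : List (Fin n)} : IsColRankProfile F A l ↔ IsRowRankProfile F Aᵀ l := by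
  rw [IsColRankProfile, IsRowRankProfile, rank_transpose]

end RankProfile

namespace Matrix

variable {F : Type*} [Field F] {ι κ : Type*}

section LowerTriangular

variable [Fintype ι] [LinearOrder ι] {L : Matrix ι ι F}

theorem IsLowerTriangular.diag_ne_zero_of_isUnit (hL : L.IsLowerTriangular) (hLu : IsUnit L)
    (i : ι) : L i i ≠ 0 := by
  have hdet : ∏ i, L i i ≠ 0 := by
    rw [← det_of_isLowerTriangular L hL]
    exact ((isUnit_iff_isUnit_det L).mp hLu).ne_zero
  exact prod_ne_zero_iff.mp hdet i (mem_univ i)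

theorem IsLowerTriangular.eq_zero_of_vecMul_apply_eq_zero (hL : L.IsLowerTriangular)
    (hd : ∀ i, L i i ≠ 0) {c : ι → F} (h : ∀ i, c i ≠ 0 → (c ᵥ* L) i = 0) : c = 0 := by
  classical
  by_contra hc
  obtain ⟨i₀, hi₀⟩ := Function.ne_iff.mp hc
  have hsupp : ({i | c i ≠ 0} : Finset ι).Nonempty := ⟨i₀, by simpa using hi₀⟩
  set i := max' _ hsupp
  have hci : c i ≠ 0 := (mem_filter.mp (max'_mem _ hsupp)).2
  have hcL : (c ᵥ* L) i = c i * L i i := by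
    refine sum_eq_single i (fun k _ hki => ?_) (by simp)
    show c k * L k i = 0
    obtain hlt | hgt := hki.lt_or_gt
    · rw [hL (show OrderDual.toDual i < OrderDual.toDual k from hlt), mul_zero]
    · have hck : c k = 0 := by
        by_contra hck
        exact (le_max' _ k (by simpa using hck)).not_gt hgt
      rw [hck, zero_mul]
  exact mul_ne_zero hci (hd i) (hcL ▸ h i hci)

theorem IsLowerTriangular.linearIndepOn_row_mul (hL : L.IsLowerTriangular) (hd : ∀ i, L i i ≠ 0)
    {B : Matrix ι κ F} {S : Finset ι} (hB0 : ∀ i ∉ S, B i = 0) (hB : LinearIndepOn F B.row S) :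
    LinearIndepOn F (L * B).row S := by
  classical
  rw [linearIndepOn_finset_iff] at hB ⊢
  intro f hf i hi
  set c : ι → F := fun i => if i ∈ S then f i else 0
  have hcLB : ∑ k ∈ S, (c ᵥ* L) k • B k = 0 := by
    simp only [row_apply'] at hf ⊢
    rw [sum_subset (subset_univ S) fun k _ hk => by rw [hB0 k hk, smul_zero], ← vecMul_eq_sum,
      vecMul_vecMul, vecMul_eq_sum, ← hf]
    simp only [c, ite_smul, zero_smul, sum_ite_mem, univ_inter]
  have hc : c = 0 := hL.eq_zero_of_vecMul_apply_eq_zero hd fun k hk =>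
    hB _ hcLB k (by by_contra hkS; simp [c, hkS] at hk)
  simpa [c, hi] using congrFun hc i

theorem IsLowerTriangular.mul_apply_mem_span (hL : L.IsLowerTriangular) {B : Matrix ι κ F}
    {S : Finset ι} (hB0 : ∀ i ∉ S, B i = 0) (x : ι) :
    (L * B) x ∈ span F (B '' ↑{k ∈ S | k ≤ x}) := by
  rw [mul_apply_eq_vecMul, vecMul_eq_sum]
  refine sum_mem fun k _ => ?_
  by_cases hkS : k ∈ S
  · by_cases hkx : k ≤ x
    · exact smul_mem _ _ (subset_span ⟨k, by simp [hkS, hkx], rfl⟩)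
    · rw [hL (show OrderDual.toDual k < OrderDual.toDual x from lt_of_not_ge hkx), zero_smul]
      exact zero_mem _
  · rw [hB0 k hkS, smul_zero]
    exact zero_mem _

end LowerTriangular

open scoped Classical in
theorem linearIndepOn_row_filter_ne_zero [Fintype ι] {E : Matrix ι κ F}
    (hEcol : ∀ (j : κ) (i i' : ι), E i j ≠ 0 → E i' j ≠ 0 → i = i') :
    LinearIndepOn F E.row ↑(univ.filter fun i => E i ≠ 0) := by
  rw [linearIndepOn_finset_iff]
  intro f hf i hi
  obtain ⟨j, hj⟩ := Function.ne_iff.mp (mem_filter.mp hi).2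
  have hfj : ∑ k ∈ univ.filter (fun i => E i ≠ 0), f k * E k j = f i * E i j := by
    refine sum_eq_single i (fun k _ hki => ?_) (fun h => absurd hi h)
    rw [show E k j = 0 by by_contra hkj; exact hki (hEcol j k i hkj hj), mul_zero]
  have := congrFun hf j
  simp only [Finset.sum_apply, Pi.smul_apply, smul_eq_mul, row_apply, Pi.zero_apply] at this
  exact (mul_eq_zero.mp (hfj ▸ this)).resolve_right hj

theorem linearIndepOn_row_mul_of_isUnit [Fintype κ] [DecidableEq κ] {B : Matrix ι κ F}
    {U : Matrix κ κ F} (hU : IsUnit U) {s : Set ι} (hB : LinearIndepOn F B.row s) :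
    LinearIndepOn F (B * U).row s :=
  hB.map' (vecMulLinear U) (LinearMap.ker_eq_bot.mpr (vecMul_injective_of_isUnit hU))

end Matrix

section LEU

variable {F : Type*} [Field F] {m n : ℕ}

open scoped Classical in
theorem isRowRankProfile_mul_mul {L : Matrix (Fin m) (Fin m) F} {E : Matrix (Fin m) (Fin n) F}
    {U : Matrix (Fin n) (Fin n) F} (hLtri : L.IsLowerTriangular) (hL : IsUnit L) (hU : IsUnit U)
    (hEcol : ∀ (j : Fin n) (i i' : Fin m), E i j ≠ 0 → E i' j ≠ 0 → i = i') :
    IsRowRankProfile F (L * E * U) ((univ.filter fun i => E i ≠ 0).sort (· ≤ ·)) := by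
  have hEU0 : ∀ i ∉ univ.filter (fun i => E i ≠ 0), (E * U) i = 0 := fun i hi => by
    rw [mul_apply_eq_vecMul, show E i = 0 by simpa using hi, zero_vecMul]
  have hEU := linearIndepOn_row_mul_of_isUnit hU (linearIndepOn_row_filter_ne_zero hEcol)
  rw [Matrix.mul_assoc]
  exact isRowRankProfile_sort_of_mem_span (E * U).row
    (hLtri.linearIndepOn_row_mul (hLtri.diag_ne_zero_of_isUnit hL) hEU0 hEU)
    (hLtri.mul_apply_mem_span hEU0)

end LEU

open scoped Classical in
theorem rankProfiles_of_LEU_general (F : Type*) [Field F] {m n : ℕ}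
    (A : Matrix (Fin m) (Fin n) F)
    (L : Matrix (Fin m) (Fin m) F) (E : Matrix (Fin m) (Fin n) F)
    (U : Matrix (Fin n) (Fin n) F)
    (hLtri : ∀ i j : Fin m, i < j → L i j = 0)
    (hL : IsUnit L)
    (hUtri : ∀ i j : Fin n, j < i → U i j = 0) (hU : IsUnit U)
    (hErow : ∀ (i : Fin m) (j j' : Fin n), E i j ≠ 0 → E i j' ≠ 0 → j = j')
    (hEcol : ∀ (j : Fin n) (i i' : Fin m), E i j ≠ 0 → E i' j ≠ 0 → i = i')
    (hA : A = L * E * U) :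
    IsRowRankProfile F A ((Finset.univ.filter fun i : Fin m => E i ≠ 0).sort (· ≤ ·)) ∧
    IsColRankProfile F A ((Finset.univ.filter fun j : Fin n => Eᵀ j ≠ 0).sort (· ≤ ·)) := by
  subst hA
  refine ⟨isRowRankProfile_mul_mul hLtri hL hU hEcol, ?_⟩
  rw [isColRankProfile_iff_isRowRankProfile_transpose, transpose_mul, transpose_mul,
    ← Matrix.mul_assoc]
  exact isRowRankProfile_mul_mul (fun i j h => hUtri j i h) ((isUnit_transpose U).mpr hU)
    ((isUnit_transpose L).mpr hL) hErow

open scoped Classical in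
theorem rankProfiles_of_LEU (F : Type*) [Field F] {m n : ℕ}
    (A : Matrix (Fin m) (Fin n) F)
    (L : Matrix (Fin m) (Fin m) F) (E : Matrix (Fin m) (Fin n) F)
    (U : Matrix (Fin n) (Fin n) F)
    (hLtri : ∀ i j : Fin m, i < j → L i j = 0) (hLdiag : ∀ i : Fin m, L i i = 1)
    (hL : IsUnit L)
    (hUtri : ∀ i j : Fin n, j < i → U i j = 0) (hU : IsUnit U)
    (hE01 : ∀ (i : Fin m) (j : Fin n), E i j = 0 ∨ E i j = 1)
    (hErow : ∀ (i : Fin m) (j j' : Fin n), E i j ≠ 0 → E i j' ≠ 0 → j = j')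
    (hEcol : ∀ (j : Fin n) (i i' : Fin m), E i j ≠ 0 → E i' j ≠ 0 → i = i')
    (hA : A = L * E * U) :
    IsRowRankProfile F A ((Finset.univ.filter fun i : Fin m => E i ≠ 0).sort (· ≤ ·)) ∧
    IsColRankProfile F A ((Finset.univ.filter fun j : Fin n => Eᵀ j ≠ 0).sort (· ≤ ·)) :=
  rankProfiles_of_LEU_general F A L E U hLtri hL hUtri hU hErow hEcol hA
end

section
/- Let A = L̄ E Ū as above with L̄ invertible lower triangular, Ū invertible upper triangular, E a 0-1 matrix with at most one 1 per row and column. Then for every k ≤ m and t ≤ n, the rank of the leading k×t submatrix of A equals the number of 1-entries of E located in positions (i,j) with i ≤ k and j ≤ t. -/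
/-!
Restricting `A = L * E * U` to its leading `k × t` block gives
`A' = L' * E' * U'`, where `L'` and `U'` are the leading `k × k` and `t × t` blocks
of `L` and `U` (this is where triangularity enters: the first `k` rows of `L` vanish
beyond column `k`, and the first `t` columns of `U` vanish below row `t`). `L'` and `U'` are triangular and their
diagonal entries are among those of `L` and `U`, so they are invertible and `A'` has
the rank of `E'`. Finally, a matrix with at most one nonzero entry in each row and
column has as its nonzero columns multiples of distinct standard basis vectors,
so its rank is the number of its nonzero entries.
-/

open Matrix Finset

namespace Matrix

section LeadingBlock

variable {R : Type*} {k m n t : ℕ}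

theorem IsUpperTriangular.isUnit_det_submatrix_castLE [CommRing R]
    {M : Matrix (Fin n) (Fin n) R} (hM : M.IsUpperTriangular) (hdet : IsUnit M.det)
    (hk : k ≤ n) : IsUnit (M.submatrix (Fin.castLE hk) (Fin.castLE hk)).det := by
  have hsub : (M.submatrix (Fin.castLE hk) (Fin.castLE hk)).IsUpperTriangular :=
    fun _ _ hij => hM hij
  rw [det_of_isUpperTriangular hM, IsUnit.prod_univ_iff] at hdet
  rw [det_of_isUpperTriangular hsub, IsUnit.prod_univ_iff]
  exact fun i => hdet _

theorem IsLowerTriangular.isUnit_det_submatrix_castLE [CommRing R]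
    {M : Matrix (Fin n) (Fin n) R} (hM : M.IsLowerTriangular) (hdet : IsUnit M.det)
    (hk : k ≤ n) : IsUnit (M.submatrix (Fin.castLE hk) (Fin.castLE hk)).det := by
  have hMt : Mᵀ.IsUpperTriangular := fun _ _ hij => hM hij
  rw [← det_transpose, transpose_submatrix]
  exact hMt.isUnit_det_submatrix_castLE (by rwa [det_transpose]) hk

variable [CommSemiring R] {ι κ : Type*}

theorem submatrix_castLE_mul_of_isLowerTriangular (L : Matrix (Fin m) (Fin m) R)
    (hL : L.IsLowerTriangular) (M : Matrix (Fin m) ι R) (hk : k ≤ m) (c : κ → ι) :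
    (L * M).submatrix (Fin.castLE hk) c =
      L.submatrix (Fin.castLE hk) (Fin.castLE hk) * M.submatrix (Fin.castLE hk) c := by
  ext i j
  refine (Fintype.sum_of_injective _ (Fin.castLE_injective hk) _ _ (fun p hp => ?_)
    (fun _ => rfl)).symm
  have hLip : L (Fin.castLE hk i) p = 0 := hL <| show Fin.castLE hk i < p by
    by_contra! h
    exact hp ⟨⟨p, lt_of_le_of_lt h i.isLt⟩, rfl⟩
  simp only [hLip, zero_mul]

theorem submatrix_mul_castLE_of_isUpperTriangular (M : Matrix κ (Fin n) R)
    (U : Matrix (Fin n) (Fin n) R) (hU : U.IsUpperTriangular) (ht : t ≤ n) (r : ι → κ) :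
    (M * U).submatrix r (Fin.castLE ht) =
      M.submatrix r (Fin.castLE ht) * U.submatrix (Fin.castLE ht) (Fin.castLE ht) := by
  rw [← transpose_inj, transpose_mul, transpose_submatrix, transpose_mul,
    submatrix_castLE_mul_of_isLowerTriangular Uᵀ (fun _ _ hij => hU hij), transpose_submatrix,
    transpose_submatrix]

end LeadingBlock

structure IsPartialMonomial {m n R : Type*} [Zero R] (M : Matrix m n R) : Prop where
  col_eq_of_ne_zero : ∀ i j j', M i j ≠ 0 → M i j' ≠ 0 → j = j'
  row_eq_of_ne_zero : ∀ j i i', M i j ≠ 0 → M i' j ≠ 0 → i = i'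

namespace IsPartialMonomial

variable {m n R : Type*}

theorem submatrix [Zero R] {M : Matrix m n R} (hM : M.IsPartialMonomial) {m' n' : Type*}
    {r : m' → m} {c : n' → n} (hr : Function.Injective r) (hc : Function.Injective c) :
    (M.submatrix r c).IsPartialMonomial where
  col_eq_of_ne_zero _ _ _ h h' := hc (hM.col_eq_of_ne_zero _ _ _ h h')
  row_eq_of_ne_zero _ _ _ h h' := hr (hM.row_eq_of_ne_zero _ _ _ h h')

variable [Fintype m] [Fintype n]

theorem rank_eq_card_ne_zero_cols [Field R] {M : Matrix m n R} (hM : M.IsPartialMonomial) :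
    M.rank = Nat.card {j // ∃ i, M i j ≠ 0} := by
  classical
  set S := {j // ∃ i, M i j ≠ 0}
  choose r hr using fun j : S => j.2
  have hr_inj : Function.Injective r := fun j j' h =>
    Subtype.ext (hM.col_eq_of_ne_zero _ _ _ (hr j) (h ▸ hr j'))
  have hcol : ∀ j : S, M.col j = M (r j) j • Pi.single (r j) 1 := by
    intro j
    ext i
    by_cases hi : i = r j
    · subst hi; simp
    · have : M i j = 0 := by_contra fun h => hi (hM.row_eq_of_ne_zero _ _ _ h (hr j))
      simp [this, hi]
  have hli : LinearIndependent R fun j : S => M.col j := by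
    convert ((Pi.basisFun R m).linearIndependent.comp r hr_inj).units_smul
      (fun j => Units.mk0 _ (hr j)) using 1
    ext j : 1
    simp [hcol]
  have hspan : Submodule.span R (Set.range M.col) =
      Submodule.span R (Set.range fun j : S => M.col j) := by
    refine le_antisymm (Submodule.span_le.2 ?_)
      (Submodule.span_mono (Set.range_comp_subset_range _ _))
    rintro _ ⟨j, rfl⟩
    by_cases hj : ∃ i, M i j ≠ 0
    · exact Submodule.subset_span ⟨⟨j, hj⟩, rfl⟩
    · have hzero : M.col j = 0 := funext fun i => not_not.1 fun h => hj ⟨i, h⟩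
      simp [hzero]
  rw [rank_eq_finrank_span_cols, hspan, finrank_span_eq_card hli, Nat.card_eq_fintype_card]

theorem card_ne_zero_eq_card_ne_zero_cols [Zero R] {M : Matrix m n R}
    [DecidablePred fun p : m × n => M p.1 p.2 ≠ 0] (hM : M.IsPartialMonomial) :
    #{p : m × n | M p.1 p.2 ≠ 0} = Nat.card {j // ∃ i, M i j ≠ 0} := by
  classical
  rw [Nat.card_eq_fintype_card, Fintype.card_subtype, ← card_image_of_injOn (f := Prod.snd)]
  · congr 1
    ext j
    simp
  · rintro p hp q hq (hpq : p.2 = q.2)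
    have hp : M p.1 p.2 ≠ 0 := by simpa using hp
    have hq : M q.1 p.2 ≠ 0 := by simpa [hpq] using hq
    exact Prod.ext (hM.row_eq_of_ne_zero _ _ _ hp hq) hpq

theorem rank_eq_card_ne_zero [Field R] {M : Matrix m n R}
    [DecidablePred fun p : m × n => M p.1 p.2 ≠ 0] (hM : M.IsPartialMonomial) :
    M.rank = #{p : m × n | M p.1 p.2 ≠ 0} := by
  rw [hM.rank_eq_card_ne_zero_cols, hM.card_ne_zero_eq_card_ne_zero_cols]

end IsPartialMonomial

end Matrix

theorem card_filter_castLE_prod {m n k t : ℕ} (hk : k ≤ m) (ht : t ≤ n)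
    (P : Fin m × Fin n → Prop) [DecidablePred P] :
    #{p : Fin k × Fin t | P (Fin.castLE hk p.1, Fin.castLE ht p.2)} =
      #{p : Fin m × Fin n | P p ∧ (p.1 : ℕ) < k ∧ (p.2 : ℕ) < t} := by
  refine card_bij (fun p _ => (Fin.castLE hk p.1, Fin.castLE ht p.2)) ?_ ?_ ?_
  · intro p hp
    simp only [mem_filter, mem_univ, true_and, Fin.val_castLE] at hp ⊢
    exact ⟨hp, p.1.isLt, p.2.isLt⟩
  · intro p _ q _ h
    simpa [Prod.ext_iff, Fin.castLE_inj] using h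
  · rintro ⟨i, j⟩ hq
    simp only [mem_filter, mem_univ, true_and] at hq
    exact ⟨(⟨i, hq.2.1⟩, ⟨j, hq.2.2⟩), by simpa using hq.1, rfl⟩

open scoped Classical in
theorem rank_leading_submatrix_of_LEU_general (F : Type*) [Field F] {m n : ℕ}
    (A : Matrix (Fin m) (Fin n) F)
    (L : Matrix (Fin m) (Fin m) F) (E : Matrix (Fin m) (Fin n) F)
    (U : Matrix (Fin n) (Fin n) F)
    (hLtri : ∀ i j : Fin m, i < j → L i j = 0) (hL : IsUnit L)
    (hUtri : ∀ i j : Fin n, j < i → U i j = 0) (hU : IsUnit U)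
    (hErow : ∀ (i : Fin m) (j j' : Fin n), E i j ≠ 0 → E i j' ≠ 0 → j = j')
    (hEcol : ∀ (j : Fin n) (i i' : Fin m), E i j ≠ 0 → E i' j ≠ 0 → i = i')
    (hA : A = L * E * U) :
    ∀ (k t : ℕ) (hk : k ≤ m) (ht : t ≤ n),
      (A.submatrix (Fin.castLE hk) (Fin.castLE ht)).rank =
      (Finset.univ.filter fun p : Fin m × Fin n =>
        E p.1 p.2 ≠ 0 ∧ (p.1 : ℕ) < k ∧ (p.2 : ℕ) < t).card := by
  intro k t hk ht
  have hLlow : L.IsLowerTriangular := fun i j hij => hLtri i j hij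
  have hUup : U.IsUpperTriangular := fun i j hij => hUtri i j hij
  have hE : E.IsPartialMonomial := ⟨hErow, hEcol⟩
  rw [hA, submatrix_mul_castLE_of_isUpperTriangular _ U hUup,
    submatrix_castLE_mul_of_isLowerTriangular L hLlow,
    rank_mul_eq_left_of_isUnit_det _ _
      (hUup.isUnit_det_submatrix_castLE ((isUnit_iff_isUnit_det U).mp hU) ht),
    rank_mul_eq_right_of_isUnit_det _ _
      (hLlow.isUnit_det_submatrix_castLE ((isUnit_iff_isUnit_det L).mp hL) hk),
    (hE.submatrix (Fin.castLE_injective hk) (Fin.castLE_injective ht)).rank_eq_card_ne_zero]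
  exact card_filter_castLE_prod hk ht fun p => E p.1 p.2 ≠ 0

open scoped Classical in
theorem rank_leading_submatrix_of_LEU (F : Type*) [Field F] {m n : ℕ}
    (A : Matrix (Fin m) (Fin n) F)
    (L : Matrix (Fin m) (Fin m) F) (E : Matrix (Fin m) (Fin n) F)
    (U : Matrix (Fin n) (Fin n) F)
    (hLtri : ∀ i j : Fin m, i < j → L i j = 0) (hL : IsUnit L)
    (hUtri : ∀ i j : Fin n, j < i → U i j = 0) (hU : IsUnit U)
    (hE01 : ∀ (i : Fin m) (j : Fin n), E i j = 0 ∨ E i j = 1)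
    (hErow : ∀ (i : Fin m) (j j' : Fin n), E i j ≠ 0 → E i j' ≠ 0 → j = j')
    (hEcol : ∀ (j : Fin n) (i i' : Fin m), E i j ≠ 0 → E i' j ≠ 0 → i = i')
    (hA : A = L * E * U) :
    ∀ (k t : ℕ) (hk : k ≤ m) (ht : t ≤ n),
      (A.submatrix (Fin.castLE hk) (Fin.castLE ht)).rank =
      (Finset.univ.filter fun p : Fin m × Fin n =>
        E p.1 p.2 ≠ 0 ∧ (p.1 : ℕ) < k ∧ (p.2 : ℕ) < t).card :=
  rank_leading_submatrix_of_LEU_general F A L E U hLtri hL hUtri hU hErow hEcol hA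
end

section
/- Let R : ℕ×ℕ → ℝ satisfy R(1,n) = 0 and R(2m,n) = R(m,n) + R(m,n−m) + m(n+m) for all m ≤ n. Then for m a power of two and m ≤ n: R(m,n) = log₂(m)·(mn/2 − m²/4) + m² + O(mn + m²); in particular R(m,m) = (1 + log₂(m)/4)·m² + O(m²). -/
lemma ple_exact (R : ℕ → ℕ → ℝ)
    (hbase : ∀ n : ℕ, R 1 n = 0)
    (hrec : ∀ m n : ℕ, m ≤ n →
      R (2 * m) n = R m n + R m (n - m) + (m : ℝ) * ((n : ℝ) + (m : ℝ))) :
    ∀ k n : ℕ, 2 ^ k ≤ n →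
      R (2 ^ k) n = (k : ℝ) * (((2:ℝ) ^ k) * (n : ℝ) / 2 - ((2:ℝ) ^ k) ^ 2 / 4)
        + ((2:ℝ) ^ k) ^ 2 - (2:ℝ) ^ k := by
  intro k
  induction k with
  | zero => intro n hn; simp [hbase]
  | succ k ih =>
    intro n hn
    have h1 : 2 ^ k ≤ n := le_trans (Nat.pow_le_pow_right (by norm_num) (Nat.le_succ k)) hn
    have h2 : 2 ^ k ≤ n - 2 ^ k := by
      have : 2 ^ k + 2 ^ k ≤ n := by
        have : 2 ^ (k + 1) = 2 ^ k + 2 ^ k := by ring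
        omega
      omega
    have hrw : (2 : ℕ) ^ (k + 1) = 2 * 2 ^ k := by ring
    have hcast : ((n - 2 ^ k : ℕ) : ℝ) = (n : ℝ) - (2:ℝ) ^ k := by
      push_cast [Nat.cast_sub h1]; ring
    rw [hrw, hrec (2 ^ k) n h1, ih n h1, ih (n - 2 ^ k) h2, hcast]
    push_cast
    ring

theorem ple_modular_reductions (R : ℕ → ℕ → ℝ)
    (hbase : ∀ n : ℕ, R 1 n = 0)
    (hrec : ∀ m n : ℕ, m ≤ n →
      R (2 * m) n = R m n + R m (n - m) + (m : ℝ) * ((n : ℝ) + (m : ℝ))) :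
    ∃ C : ℝ, 0 < C ∧
      (∀ k n : ℕ, 2 ^ k ≤ n →
        |R (2 ^ k) n -
          ((k : ℝ) * (((2 ^ k : ℕ) : ℝ) * (n : ℝ) / 2 - ((2 ^ k : ℕ) : ℝ) ^ 2 / 4) +
            ((2 ^ k : ℕ) : ℝ) ^ 2)| ≤
        C * (((2 ^ k : ℕ) : ℝ) * (n : ℝ) + ((2 ^ k : ℕ) : ℝ) ^ 2)) ∧
      (∀ k : ℕ,
        |R (2 ^ k) (2 ^ k) - (1 + (k : ℝ) / 4) * ((2 ^ k : ℕ) : ℝ) ^ 2| ≤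
        C * ((2 ^ k : ℕ) : ℝ) ^ 2) := by
  have key := ple_exact R hbase hrec
  refine ⟨1, one_pos, ?_, ?_⟩
  · intro k n hn
    rw [key k n hn]
    push_cast
    have hpos : (0:ℝ) < (2:ℝ) ^ k := by positivity
    have h1 : |(-(2:ℝ) ^ k)| = (2:ℝ) ^ k := by rw [abs_neg, abs_of_pos hpos]
    have heq : (k : ℝ) * ((2:ℝ) ^ k * (n : ℝ) / 2 - ((2:ℝ) ^ k) ^ 2 / 4)
        + ((2:ℝ) ^ k) ^ 2 - (2:ℝ) ^ k -
        ((k : ℝ) * ((2:ℝ) ^ k * (n : ℝ) / 2 - ((2:ℝ) ^ k) ^ 2 / 4) + ((2:ℝ) ^ k) ^ 2)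
        = -(2:ℝ) ^ k := by ring
    rw [heq, h1]
    have hn' : (1:ℝ) ≤ (n:ℝ) := by
      have : 1 ≤ n := le_trans (Nat.one_le_two_pow) hn
      exact_mod_cast this
    nlinarith [sq_nonneg ((2:ℝ)^k)]
  · intro k
    rw [key k (2 ^ k) le_rfl]
    push_cast
    have hpos : (0:ℝ) < (2:ℝ) ^ k := by positivity
    have heq : (k : ℝ) * ((2:ℝ) ^ k * ((2:ℝ) ^ k) / 2 - ((2:ℝ) ^ k) ^ 2 / 4)
        + ((2:ℝ) ^ k) ^ 2 - (2:ℝ) ^ k -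
        (1 + (k : ℝ) / 4) * ((2:ℝ) ^ k) ^ 2 = -(2:ℝ) ^ k := by ring
    rw [heq, abs_neg, abs_of_pos hpos]
    have h2 : (2:ℝ) ^ k ≤ ((2:ℝ) ^ k) ^ 2 := by nlinarith [one_le_pow₀ (by norm_num : (1:ℝ) ≤ 2) (n := k)]
    linarith
end

section
/- Let A = [[A₁, A₂],[A₃, A₄]] be a block matrix over a field, and suppose A₁ = P₁ [L₁; M₁][U₁ V₁] Q₁ with P₁, Q₁ permutations, L₁ unit lower triangular r₁×r₁, U₁ upper triangular invertible r₁×r₁. Set [B₁; B₂] = P₁ᵀ A₂, [C₁ C₂] = A₃ Q₁ᵀ, D = L₁⁻¹B₁, E = C₁U₁⁻¹, F = B₂ − M₁D, G = C₂ − EV₁, H = A₄ − ED. Then A = diag(P₁, I) · [[L₁, 0, 0],[M₁, I, 0],[E, 0, I]] · [[U₁, V₁, D],[0, 0, F],[0, G, H]] · diag(Q₁, I). -/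
/-!
Multiplying out the two middle factors gives the blocks `[L₁; M₁] [U₁ V₁]`, `[L₁ D; M₁ D + F]`,
`[E U₁, E V₁ + G]` and `E D + H`, which by the definitions of `D, E, F, G, H` are
`[L₁; M₁] [U₁ V₁]`, `[B₁; B₂]`, `[C₁ C₂]` and `A₄`. The outer factors `diag(P₁, I)`, `diag(Q₁, I)`
act only on the leading block row and column, and undo the permutations in the definitions of
`B` and `C` because `P₁ P₁ᵀ = Q₁ᵀ Q₁ = I`.
-/

open Matrix

namespace Matrix

section Permutation

variable {R n : Type*} [NonAssocSemiring R] [DecidableEq n] [Fintype n] (σ : Equiv.Perm n)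

lemma permMatrix_mul_transpose_permMatrix : σ.permMatrix R * (σ.permMatrix R)ᵀ = 1 := by
  rw [transpose_permMatrix, ← permMatrix_mul, inv_mul_cancel, permMatrix_one]

lemma transpose_permMatrix_mul_permMatrix : (σ.permMatrix R)ᵀ * σ.permMatrix R = 1 := by
  rw [transpose_permMatrix, ← permMatrix_mul, mul_inv_cancel, permMatrix_one]

end Permutation

section Blocks

variable {R : Type*} [Semiring R]

lemma fromBlocks_one_mul_fromBlocks_mul_fromBlocks_one
    {m m' n n' k l : Type*} [Fintype m'] [Fintype n'] [Fintype k] [Fintype l]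
    [DecidableEq k] [DecidableEq l]
    (P : Matrix m m' R) (Q : Matrix n' n R) (X : Matrix m' n' R) (Y : Matrix m' l R)
    (Z : Matrix k n' R) (W : Matrix k l R) :
    fromBlocks P 0 0 (1 : Matrix k k R) * fromBlocks X Y Z W * fromBlocks Q 0 0 (1 : Matrix l l R) =
      fromBlocks (P * X * Q) (P * Y) (Z * Q) W := by
  simp [fromBlocks_multiply]

lemma fromBlocks_unitLower_mul_fromBlocks_upper
    {m₁ m₂ m₃ p n₁ n₂ n₃ : Type*} [Fintype m₂] [Fintype m₃] [Fintype p]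
    [DecidableEq m₂] [DecidableEq m₃]
    (L : Matrix m₁ p R) (M : Matrix m₂ p R) (E : Matrix m₃ p R)
    (U : Matrix p n₁ R) (V : Matrix p n₂ R) (D : Matrix p n₃ R)
    (Fm : Matrix m₂ n₃ R) (G : Matrix m₃ n₂ R) (H : Matrix m₃ n₃ R) :
    (fromBlocks (fromBlocks L 0 M 1) 0 (fromCols E 0) 1 :
        Matrix ((m₁ ⊕ m₂) ⊕ m₃) ((p ⊕ m₂) ⊕ m₃) R) *
      fromBlocks (fromBlocks U V 0 0) (fromRows D Fm) (fromCols 0 G) H =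
      fromBlocks (fromRows L M * fromCols U V) (fromRows (L * D) (M * D + Fm))
        (fromCols (E * U) (E * V + G)) (E * D + H) := by
  rw [fromBlocks_multiply]
  congr 1
  · rw [fromRows_mul_fromCols, fromBlocks_multiply]
    simp
  · simp [fromBlocks_mul_fromRows]
  · rw [fromCols_mul_fromBlocks]
    ext i (j | j) <;> simp
  · simp [fromCols_mul_fromRows]

end Blocks

end Matrix

theorem pluq_first_update_step_general (F : Type*) [Field F] {r₁ k₂ k' l₂ l' : ℕ}
    (A₁ : Matrix (Fin r₁ ⊕ Fin k₂) (Fin r₁ ⊕ Fin l₂) F)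
    (A₂ : Matrix (Fin r₁ ⊕ Fin k₂) (Fin l') F)
    (A₃ : Matrix (Fin k') (Fin r₁ ⊕ Fin l₂) F)
    (A₄ : Matrix (Fin k') (Fin l') F)
    (σ₁ : Equiv.Perm (Fin r₁ ⊕ Fin k₂)) (τ₁ : Equiv.Perm (Fin r₁ ⊕ Fin l₂))
    (L₁ : Matrix (Fin r₁) (Fin r₁) F) (M₁ : Matrix (Fin k₂) (Fin r₁) F)
    (U₁ : Matrix (Fin r₁) (Fin r₁) F) (V₁ : Matrix (Fin r₁) (Fin l₂) F)
    (hA₁ : A₁ = σ₁.permMatrix F * fromRows L₁ M₁ * fromCols U₁ V₁ * τ₁.permMatrix F)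
    (B₁ : Matrix (Fin r₁) (Fin l') F) (B₂ : Matrix (Fin k₂) (Fin l') F)
    (hB : fromRows B₁ B₂ = (σ₁.permMatrix F)ᵀ * A₂)
    (C₁ : Matrix (Fin k') (Fin r₁) F) (C₂ : Matrix (Fin k') (Fin l₂) F)
    (hC : fromCols C₁ C₂ = A₃ * (τ₁.permMatrix F)ᵀ)
    (D : Matrix (Fin r₁) (Fin l') F) (hD : L₁ * D = B₁)
    (E : Matrix (Fin k') (Fin r₁) F) (hE : E * U₁ = C₁)
    (G : Matrix (Fin k') (Fin l₂) F) (hG : G = C₂ - E * V₁)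
    (Fm : Matrix (Fin k₂) (Fin l') F) (hF : Fm = B₂ - M₁ * D)
    (H : Matrix (Fin k') (Fin l') F) (hH : H = A₄ - E * D) :
    fromBlocks A₁ A₂ A₃ A₄ =
      fromBlocks (σ₁.permMatrix F) 0 0 (1 : Matrix (Fin k') (Fin k') F) *
      (fromBlocks (fromBlocks L₁ 0 M₁ 1) 0 (fromCols E 0) 1 :
        Matrix ((Fin r₁ ⊕ Fin k₂) ⊕ Fin k') ((Fin r₁ ⊕ Fin k₂) ⊕ Fin k') F) *
      fromBlocks (fromBlocks U₁ V₁ 0 0) (fromRows D Fm) (fromCols 0 G) H *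
      fromBlocks (τ₁.permMatrix F) 0 0 (1 : Matrix (Fin l') (Fin l') F) := by
  subst hG hF hH
  have hA₂ : A₂ = σ₁.permMatrix F * fromRows B₁ B₂ := by
    rw [hB, ← Matrix.mul_assoc, permMatrix_mul_transpose_permMatrix, Matrix.one_mul]
  have hA₃ : A₃ = fromCols C₁ C₂ * τ₁.permMatrix F := by
    rw [hC, Matrix.mul_assoc, transpose_permMatrix_mul_permMatrix, Matrix.mul_one]
  rw [Matrix.mul_assoc (fromBlocks (σ₁.permMatrix F) 0 0 1),
    fromBlocks_unitLower_mul_fromBlocks_upper, fromBlocks_one_mul_fromBlocks_mul_fromBlocks_one,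
    hA₁, hA₂, hA₃, hD, hE, Matrix.mul_assoc (σ₁.permMatrix F)]
  simp only [add_sub_cancel]

theorem pluq_first_update_step (F : Type*) [Field F] {r₁ k₂ k' l₂ l' : ℕ}
    (A₁ : Matrix (Fin r₁ ⊕ Fin k₂) (Fin r₁ ⊕ Fin l₂) F)
    (A₂ : Matrix (Fin r₁ ⊕ Fin k₂) (Fin l') F)
    (A₃ : Matrix (Fin k') (Fin r₁ ⊕ Fin l₂) F)
    (A₄ : Matrix (Fin k') (Fin l') F)
    (σ₁ : Equiv.Perm (Fin r₁ ⊕ Fin k₂)) (τ₁ : Equiv.Perm (Fin r₁ ⊕ Fin l₂))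
    (L₁ : Matrix (Fin r₁) (Fin r₁) F) (M₁ : Matrix (Fin k₂) (Fin r₁) F)
    (U₁ : Matrix (Fin r₁) (Fin r₁) F) (V₁ : Matrix (Fin r₁) (Fin l₂) F)
    (hL₁tri : ∀ i j : Fin r₁, i < j → L₁ i j = 0) (hL₁diag : ∀ i : Fin r₁, L₁ i i = 1)
    (hU₁tri : ∀ i j : Fin r₁, j < i → U₁ i j = 0) (hU₁diag : ∀ i : Fin r₁, U₁ i i ≠ 0)
    (hA₁ : A₁ = σ₁.permMatrix F * fromRows L₁ M₁ * fromCols U₁ V₁ * τ₁.permMatrix F)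
    (B₁ : Matrix (Fin r₁) (Fin l') F) (B₂ : Matrix (Fin k₂) (Fin l') F)
    (hB : fromRows B₁ B₂ = (σ₁.permMatrix F)ᵀ * A₂)
    (C₁ : Matrix (Fin k') (Fin r₁) F) (C₂ : Matrix (Fin k') (Fin l₂) F)
    (hC : fromCols C₁ C₂ = A₃ * (τ₁.permMatrix F)ᵀ)
    (D : Matrix (Fin r₁) (Fin l') F) (hD : L₁ * D = B₁)
    (E : Matrix (Fin k') (Fin r₁) F) (hE : E * U₁ = C₁)
    (G : Matrix (Fin k') (Fin l₂) F) (hG : G = C₂ - E * V₁)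
    (Fm : Matrix (Fin k₂) (Fin l') F) (hF : Fm = B₂ - M₁ * D)
    (H : Matrix (Fin k') (Fin l') F) (hH : H = A₄ - E * D) :
    fromBlocks A₁ A₂ A₃ A₄ =
      fromBlocks (σ₁.permMatrix F) 0 0 (1 : Matrix (Fin k') (Fin k') F) *
      (fromBlocks (fromBlocks L₁ 0 M₁ 1) 0 (fromCols E 0) 1 :
        Matrix ((Fin r₁ ⊕ Fin k₂) ⊕ Fin k') ((Fin r₁ ⊕ Fin k₂) ⊕ Fin k') F) *
      fromBlocks (fromBlocks U₁ V₁ 0 0) (fromRows D Fm) (fromCols 0 G) H *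
      fromBlocks (τ₁.permMatrix F) 0 0 (1 : Matrix (Fin l') (Fin l') F) :=
  pluq_first_update_step_general F A₁ A₂ A₃ A₄ σ₁ τ₁ L₁ M₁ U₁ V₁ hA₁ B₁ B₂ hB C₁ C₂ hC D hD E hE G
    hG Fm hF H hH
end

section
/- Let A be an m×n matrix over a field admitting A = P [L; M][U V] Q with P, Q permutations, L unit lower triangular r×r, U invertible upper triangular r×r, and suppose additionally that P [[L,0],[M,I_{m−r}]] Pᵀ is lower triangular. Then for every k ≤ m, the rank of the k×n submatrix formed by the first k rows of A equals the rank of the first k rows of P [[I_r,0],[0,0]] Q. -/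
open Matrix

lemma sum_fin_trunc {F : Type*} [AddCommMonoid F] {n k : ℕ} (hk : k ≤ n) (f : Fin n → F)
    (h0 : ∀ t : Fin n, k ≤ (t : ℕ) → f t = 0) :
    ∑ t, f t = ∑ s : Fin k, f (Fin.castLE hk s) := by
  set g : ℕ → F := fun i => if h : i < n then f ⟨i, h⟩ else 0 with hg
  have h1 : ∑ t : Fin n, f t = ∑ i ∈ Finset.range n, g i := by
    rw [← Fin.sum_univ_eq_sum_range]
    exact Finset.sum_congr rfl fun t _ => by simp [hg, t.isLt]
  have h2 : ∑ i ∈ Finset.range k, g i = ∑ i ∈ Finset.range n, g i := by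
    refine Finset.sum_subset (Finset.range_subset_range.mpr hk) fun x hx hnx => ?_
    have hxn : x < n := Finset.mem_range.mp hx
    have hxk : k ≤ x := le_of_not_gt (fun h => hnx (Finset.mem_range.mpr h))
    simp [hg, hxn, h0 ⟨x, hxn⟩ hxk]
  have h3 : ∑ s : Fin k, f (Fin.castLE hk s) = ∑ i ∈ Finset.range k, g i := by
    rw [← Fin.sum_univ_eq_sum_range]
    refine Finset.sum_congr rfl fun s _ => ?_
    simp [hg, lt_of_lt_of_le s.isLt hk, Fin.castLE]
  rw [h1, ← h2, h3]

theorem rank_first_rows_of_pluq (F : Type*) [Field F] {m n r : ℕ}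
    (hrm : r ≤ m) (hrn : r ≤ n)
    (A : Matrix (Fin m) (Fin n) F)
    (σ : Equiv.Perm (Fin m)) (τ : Equiv.Perm (Fin n))
    (Y : Matrix (Fin m) (Fin r) F) (Z : Matrix (Fin r) (Fin n) F)
    -- `Y = [L; M]` with `L` unit lower triangular
    (hYtri : ∀ (i : Fin m) (j : Fin r), (i : ℕ) < (j : ℕ) → Y i j = 0)
    (hYdiag : ∀ j : Fin r, Y (Fin.castLE hrm j) j = 1)
    -- `Z = [U V]` with `U` upper triangular with nonzero diagonal
    (hZtri : ∀ i j : Fin r, (j : ℕ) < (i : ℕ) → Z i (Fin.castLE hrn j) = 0)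
    (hZdiag : ∀ i : Fin r, Z i (Fin.castLE hrn i) ≠ 0)
    (hA : A = σ.permMatrix F * Y * Z * τ.permMatrix F)
    -- `P [[L,0],[M,I]] Pᵀ` is lower triangular
    (hLbar : ∀ i j : Fin m, i < j →
      (σ.permMatrix F * extLow hrm Y * (σ.permMatrix F)ᵀ) i j = 0) :
    ∀ (k : ℕ) (hk : k ≤ m),
      (A.submatrix (Fin.castLE hk) id).rank =
      ((σ.permMatrix F * embedIdMat F m n r * τ.permMatrix F).submatrix
        (Fin.castLE hk) id).rank := by
  classical
  intro k hk
  set X := extLow hrm Y with hX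
  set E := embedIdMat F m n r with hE
  set N : Matrix (Fin n) (Fin n) F :=
    Matrix.of fun i j => if h : (i : ℕ) < r then Z ⟨i, h⟩ j else if i = j then 1 else 0 with hN
  -- diagonal of X is 1
  have hXdiag : ∀ a : Fin m, X a a = 1 := by
    intro a
    by_cases h : (a : ℕ) < r
    · have hc : Fin.castLE hrm ⟨(a : ℕ), h⟩ = a := rfl
      have := hYdiag ⟨(a : ℕ), h⟩
      rw [hc] at this
      simp [hX, extLow, h, this]
    · simp [hX, extLow, h]
  -- N is upper triangular with unit det
  have hNtri : N.BlockTriangular id := by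
    intro i j hij
    simp only [id] at hij
    simp only [hN, Matrix.of_apply]
    by_cases h : (i : ℕ) < r
    · have hj : (j : ℕ) < r := lt_trans hij h
      rw [dif_pos h]
      have hc : Fin.castLE hrn ⟨(j : ℕ), hj⟩ = j := rfl
      have := hZtri ⟨(i : ℕ), h⟩ ⟨(j : ℕ), hj⟩ hij
      rwa [hc] at this
    · rw [dif_neg h, if_neg (ne_of_gt hij)]
  have hNdet : IsUnit N.det := by
    rw [Matrix.det_of_upperTriangular hNtri]
    refine isUnit_iff_ne_zero.mpr (Finset.prod_ne_zero_iff.mpr fun i _ => ?_)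
    by_cases h : (i : ℕ) < r
    · have hc : Fin.castLE hrn ⟨(i : ℕ), h⟩ = i := rfl
      have := hZdiag ⟨(i : ℕ), h⟩
      rw [hc] at this
      simpa [hN, h] using this
    · simp [hN, h]
  -- the key factorization X * E * N = Y * Z
  have hXEa : ∀ (i : Fin m) (t : Fin n),
      (X * E) i t = if h : (t : ℕ) < r then Y i ⟨(t : ℕ), h⟩ else 0 := by
    intro i t
    rw [Matrix.mul_apply]
    by_cases h : (t : ℕ) < r
    · rw [dif_pos h]
      rw [Finset.sum_eq_single (Fin.castLE hrm ⟨(t : ℕ), h⟩)]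
      · simp [hX, hE, extLow, embedIdMat, h]
      · intro b _ hb
        have hbv : (b : ℕ) ≠ (t : ℕ) ∨ ¬ (b : ℕ) < r := by
          by_contra hcon
          push_neg at hcon
          exact hb (Fin.ext hcon.1)
        have hEbt : E b t = 0 := by
          rcases hbv with h1 | h1 <;> simp [hE, embedIdMat, h1]
        simp [hEbt]
      · simp
    · rw [dif_neg h]
      refine Finset.sum_eq_zero fun b _ => ?_
      have hEbt : E b t = 0 := by
        simp only [hE, embedIdMat, Matrix.of_apply, ite_eq_right_iff, and_imp]
        intro h1 h2
        exact absurd (h1 ▸ h2) h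
      simp [hEbt]
  have hXE : X * E * N = Y * Z := by
    ext i j
    rw [Matrix.mul_apply]
    rw [sum_fin_trunc hrn (fun t => (X * E) i t * N t j)
      (fun t ht => by simp only [hXEa]; rw [dif_neg (not_lt.mpr ht), zero_mul])]
    rw [Matrix.mul_apply]
    refine Finset.sum_congr rfl fun s _ => ?_
    have hs : ((Fin.castLE hrn s : Fin n) : ℕ) < r := s.isLt
    rw [hXEa, dif_pos hs]
    simp [hN]
  -- rewrite permutation products as submatrices
  have hA2 : A = (Y * Z).submatrix (⇑σ) (⇑τ.symm) := by
    rw [hA, Matrix.mul_assoc (σ.permMatrix F) Y Z]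
    rw [Equiv.Perm.permMatrix, PEquiv.toMatrix_toPEquiv_mul,
      Equiv.Perm.permMatrix, PEquiv.mul_toMatrix_toPEquiv, Matrix.submatrix_submatrix]
    simp
  have hT : σ.permMatrix F * E * τ.permMatrix F = E.submatrix (⇑σ) (⇑τ.symm) := by
    rw [Equiv.Perm.permMatrix, PEquiv.toMatrix_toPEquiv_mul,
      Equiv.Perm.permMatrix, PEquiv.mul_toMatrix_toPEquiv, Matrix.submatrix_submatrix]
    simp
  have hPt : (σ.permMatrix F)ᵀ = (σ⁻¹).permMatrix F := by
    rw [Equiv.Perm.permMatrix, Equiv.Perm.permMatrix, ← PEquiv.toMatrix_symm,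
      ← Equiv.toPEquiv_symm]
    rfl
  set L : Matrix (Fin m) (Fin m) F := X.submatrix (⇑σ) (⇑σ) with hLdef
  have hLeq : σ.permMatrix F * X * (σ.permMatrix F)ᵀ = L := by
    rw [hPt, Equiv.Perm.permMatrix, PEquiv.toMatrix_toPEquiv_mul,
      Equiv.Perm.permMatrix, PEquiv.mul_toMatrix_toPEquiv, Matrix.submatrix_submatrix]
    simp [hLdef, Equiv.Perm.inv_def]
  have hLtri : ∀ i j : Fin m, i < j → L i j = 0 := fun i j hij => by
    rw [← hLeq]; exact hLbar i j hij
  have hLdiag : ∀ i : Fin m, L i i = 1 := fun i => hXdiag (σ i)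
  set R : Matrix (Fin n) (Fin n) F := N.submatrix (⇑τ.symm) (⇑τ.symm) with hRdef
  have hRdet : IsUnit R.det := by
    rw [hRdef, Matrix.det_submatrix_equiv_self τ.symm N]; exact hNdet
  -- factor A
  set W := E.submatrix (⇑σ) (⇑τ.symm) * R with hWdef
  have hfact : A = L * W := by
    rw [hA2, ← hXE, hWdef, hLdef, hRdef, ← Matrix.mul_assoc,
      Matrix.submatrix_mul_equiv X E (⇑σ) σ (⇑τ.symm),
      Matrix.submatrix_mul_equiv (X * E) N (⇑σ) τ.symm (⇑τ.symm)]
  -- split off first k rows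
  have hsplit : (L * W).submatrix (Fin.castLE hk) id
      = L.submatrix (Fin.castLE hk) (Fin.castLE hk) * W.submatrix (Fin.castLE hk) id := by
    ext i j
    simp only [Matrix.submatrix_apply, Matrix.mul_apply, id]
    rw [sum_fin_trunc hk (fun t => L (Fin.castLE hk i) t * W t j) (fun t ht => ?_)]
    have hlt : Fin.castLE hk i < t := by
      rw [Fin.lt_def]
      exact lt_of_lt_of_le i.isLt ht
    rw [hLtri _ _ hlt, zero_mul]
  have hLk : IsUnit (L.submatrix (Fin.castLE hk) (Fin.castLE hk)).det := by
    rw [Matrix.det_of_lowerTriangular _ (fun i j hij => ?_)]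
    · simp [hLdiag]
    · refine hLtri _ _ ?_
      rw [Fin.lt_def]
      exact hij
  have hWsub : W.submatrix (Fin.castLE hk) id
      = (E.submatrix (⇑σ) (⇑τ.symm)).submatrix (Fin.castLE hk) id * R := by
    ext i j
    simp [hWdef, Matrix.mul_apply]
  rw [hfact, hT, hsplit, hWsub,
    Matrix.rank_mul_eq_right_of_isUnit_det _ _ hLk,
    Matrix.rank_mul_eq_left_of_isUnit_det R _ hRdet]
end
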